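/- Gaussian mechanism RDP: if a function f: D → ℝ^d has ℓ2-sensitivity Δ (i.e., ‖f(D) − f(D')‖₂ ≤ Δ for all neighboring D, D'), then the mechanism G_f(D) = f(D) + N(0, σ²Δ² I_d) satisfies (α, α/(2σ²))-RDP for every α > 1. -/

import Mathlib

open MeasureTheory ProbabilityTheory Real
open scoped NNReal ENNReal

/-- Rényi divergence of order `α` between measures `μ` and `ν`. -/
noncomputable def renyiDiv {Ω : Type*} [MeasurableSpace Ω] (α : ℝ) (μ ν : Measure Ω) : ℝ :=
  (α - 1)⁻¹ * Real.log (∫ x, ((μ.rnDeriv ν x).toReal) ^ α ∂ν)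

/-- The isotropic Gaussian `N(0, v I_d)` on `EuclideanSpace ℝ (Fin d)`. -/
noncomputable def gaussianVec (d : ℕ) (v : ℝ≥0) : Measure (EuclideanSpace ℝ (Fin d)) :=
  (Measure.pi fun _ : Fin d => gaussianReal 0 v).map (EuclideanSpace.equiv (Fin d) ℝ).symm

section Aux

lemma aux_lintegral_pi : ∀ (n : ℕ) (κ : Fin n → Measure ℝ), (∀ i, SigmaFinite (κ i)) →
    ∀ (h : Fin n → ℝ → ℝ≥0∞), (∀ i, Measurable (h i)) →
    ∫⁻ x, ∏ i, h i (x i) ∂Measure.pi κ = ∏ i, ∫⁻ y, h i y ∂κ i := by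
  intro n
  induction n with
  | zero =>
    intro κ _ h _
    simp [Measure.pi_of_empty]
  | succ n ih =>
    intro κ hκ h hm
    have := hκ
    have key := (measurePreserving_piFinSuccAbove κ 0).symm
    rw [← key.map_eq, lintegral_map_equiv]
    simp_rw [MeasurableEquiv.piFinSuccAbove_symm_apply, Fin.insertNthEquiv,
      Fin.prod_univ_succ, Fin.insertNth_zero]
    simp only [Fin.zero_succAbove, cast_eq, Equiv.coe_fn_mk, Fin.cons_zero, Fin.cons_succ]
    rw [lintegral_prod_mul (f := h 0) (g := fun y : Fin n → ℝ => ∏ x : Fin n, h x.succ (y x))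
      (hm 0).aemeasurable
      (Finset.measurable_prod Finset.univ
        (fun i _ => (hm i.succ).comp (measurable_pi_apply i))).aemeasurable]
    rw [ih _ (fun i => hκ _) _ (fun i => hm _)]

lemma aux_pi_withDensity {n : ℕ} (κ μ : Fin n → Measure ℝ) [∀ i, SigmaFinite (κ i)]
    [∀ i, SigmaFinite (μ i)]
    (g : Fin n → ℝ → ℝ≥0∞) (hg : ∀ i, Measurable (g i))
    (h : ∀ i, μ i = (κ i).withDensity (g i)) :
    Measure.pi μ = (Measure.pi κ).withDensity (fun x => ∏ i, g i (x i)) := by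
  refine Measure.pi_eq fun s hs => ?_
  rw [withDensity_apply _ (MeasurableSet.univ_pi hs),
    ← lintegral_indicator (MeasurableSet.univ_pi hs)]
  have key : ∀ x : Fin n → ℝ,
      (Set.univ.pi s).indicator (fun x => ∏ i, g i (x i)) x
        = ∏ i, (s i).indicator (g i) (x i) := by
    intro x
    by_cases hx : x ∈ Set.univ.pi s
    · rw [Set.indicator_of_mem hx]
      exact Finset.prod_congr rfl fun i _ =>
        (Set.indicator_of_mem (hx i (Set.mem_univ i)) _).symm
    · rw [Set.indicator_of_notMem hx]
      simp only [Set.mem_univ_pi, not_forall] at hx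
      obtain ⟨i, hi⟩ := hx
      exact (Finset.prod_eq_zero (Finset.mem_univ i) (Set.indicator_of_notMem hi _)).symm
  simp_rw [key]
  rw [aux_lintegral_pi n κ (fun i => inferInstance) _ (fun i => (hg i).indicator (hs i))]
  refine Finset.prod_congr rfl fun i _ => ?_
  rw [lintegral_indicator (hs i), h i, withDensity_apply _ (hs i)]

lemma aux_withDensity_map {A B : Type*} [MeasurableSpace A] [MeasurableSpace B] (e : A ≃ᵐ B)
    (ρ : Measure A) (G : A → ℝ≥0∞) (hG : Measurable G) :
    (ρ.withDensity G).map e = (ρ.map e).withDensity (G ∘ e.symm) := by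
  ext s hs
  rw [Measure.map_apply e.measurable hs, withDensity_apply _ (e.measurable hs),
    withDensity_apply _ hs, Measure.restrict_map e.measurable hs,
    lintegral_map (hG.comp e.symm.measurable) e.measurable]
  simp

lemma aux_pi_gauss_translate {d : ℕ} {v : ℝ≥0} (c : Fin d → ℝ) :
    (Measure.pi fun _ : Fin d => gaussianReal 0 v).map (fun x i => c i + x i)
      = Measure.pi fun i => gaussianReal (c i) v := by
  have hm : Measurable (fun (x : Fin d → ℝ) i => c i + x i) :=
    measurable_pi_lambda _ fun i => (measurable_pi_apply i).const_add _
  refine (Measure.pi_eq fun s hs => ?_).symm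
  rw [Measure.map_apply hm (MeasurableSet.univ_pi hs)]
  have : (fun (x : Fin d → ℝ) i => c i + x i) ⁻¹' Set.univ.pi s
      = Set.univ.pi fun i => (fun y => c i + y) ⁻¹' s i := by
    ext x; simp [Set.mem_pi]
  rw [this, Measure.pi_pi]
  refine Finset.prod_congr rfl fun i _ => ?_
  rw [← Measure.map_apply (measurable_const_add (c i)) (hs i),
    gaussianReal_map_const_add (μ := 0) (c i), zero_add]

lemma aux_gauss_ratio {v : ℝ≥0} (hv : v ≠ 0) (a b : ℝ) :
    gaussianReal a v = (gaussianReal b v).withDensity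
      (fun y => ENNReal.ofReal (rexp ((a - b) * (2 * y - a - b) / (2 * v)))) := by
  have hv' : (0:ℝ) < v := by positivity
  rw [gaussianReal_of_var_ne_zero _ hv, gaussianReal_of_var_ne_zero _ hv,
    ← withDensity_mul _ (measurable_gaussianPDF b v) (by fun_prop)]
  congr 1
  ext y
  simp only [Pi.mul_apply, gaussianPDF, ← ENNReal.ofReal_mul (gaussianPDFReal_nonneg b v y)]
  congr 1
  simp only [gaussianPDFReal]
  have h : -(y - a) ^ 2 / (2 * (v:ℝ)) =
      -(y - b) ^ 2 / (2 * (v:ℝ)) + (a - b) * (2 * y - a - b) / (2 * (v:ℝ)) := by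
    field_simp
    ring
  rw [h, Real.exp_add]; ring

lemma aux_gauss_exp_lintegral {v : ℝ≥0} (hv : v ≠ 0) (m t s : ℝ) :
    ∫⁻ y, ENNReal.ofReal (rexp (t * y + s)) ∂gaussianReal m v
      = ENNReal.ofReal (rexp (s + t * m + v * t ^ 2 / 2)) := by
  have hv' : (0:ℝ) < v := by positivity
  rw [gaussianReal_of_var_ne_zero _ hv,
    lintegral_withDensity_eq_lintegral_mul _ (measurable_gaussianPDF m v) (by fun_prop)]
  have key : ∀ y, (gaussianPDF m v * fun y => ENNReal.ofReal (rexp (t * y + s))) y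
      = ENNReal.ofReal (rexp (s + t * m + v * t ^ 2 / 2)) * gaussianPDF (m + t * v) v y := by
    intro y
    simp only [Pi.mul_apply, gaussianPDF, ← ENNReal.ofReal_mul (gaussianPDFReal_nonneg _ v y),
      ← ENNReal.ofReal_mul (Real.exp_nonneg _)]
    congr 1
    simp only [gaussianPDFReal]
    have h : -(y - m) ^ 2 / (2 * (v:ℝ)) + (t * y + s) =
        (s + t * m + (v:ℝ) * t ^ 2 / 2) + -(y - (m + t * (v:ℝ))) ^ 2 / (2 * (v:ℝ)) := by
      field_simp
      ring
    rw [mul_assoc, ← Real.exp_add, h, Real.exp_add]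
    ring
  simp_rw [key]
  rw [lintegral_const_mul _ (measurable_gaussianPDF _ v), lintegral_gaussianPDF_eq_one _ hv,
    mul_one]

end Aux

/-- Gaussian mechanism RDP: if `f` has `ℓ2`-sensitivity `Δ`, then `f(D) + N(0, σ²Δ² I_d)`
satisfies `(α, α/(2σ²))`-RDP for every `α > 1`. -/
theorem gaussian_mechanism_rdp
    {D : Type*} (adj : D → D → Prop) (d : ℕ)
    (f : D → EuclideanSpace ℝ (Fin d)) (Δ σ : ℝ≥0) (hσ : 0 < σ) (hΔ : 0 < Δ)
    (hsens : ∀ d₁ d₂, adj d₁ d₂ → ‖f d₁ - f d₂‖ ≤ (Δ : ℝ))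
    (α : ℝ) (hα : 1 < α) :
    ∀ d₁ d₂, adj d₁ d₂ →
      renyiDiv α ((gaussianVec d (σ ^ 2 * Δ ^ 2)).map fun z => f d₁ + z)
        ((gaussianVec d (σ ^ 2 * Δ ^ 2)).map fun z => f d₂ + z)
        ≤ α / (2 * (σ : ℝ) ^ 2) := by
  intro d₁ d₂ hadj
  set v : ℝ≥0 := σ ^ 2 * Δ ^ 2 with hv_def
  have hv : v ≠ 0 := by positivity
  have hv' : (0:ℝ) < v := by positivity
  set e : EuclideanSpace ℝ (Fin d) ≃ᵐ (Fin d → ℝ) := (MeasurableEquiv.toLp 2 (Fin d → ℝ)).symm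
  -- the mechanism measure as a pushforward of a product of gaussians
  have hgvec : gaussianVec d v = (Measure.pi fun _ : Fin d => gaussianReal 0 v).map e.symm := rfl
  have hmech : ∀ c : EuclideanSpace ℝ (Fin d),
      (gaussianVec d v).map (fun z => c + z)
        = (Measure.pi fun i => gaussianReal (c i) v).map e.symm := by
    intro c
    rw [hgvec, Measure.map_map (measurable_const_add c) e.symm.measurable,
      ← aux_pi_gauss_translate (fun i => c i),
      Measure.map_map e.symm.measurable
        (measurable_pi_lambda _ fun i => (measurable_pi_apply i).const_add _)]
    rfl
  -- coordinates of the two means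
  set a : Fin d → ℝ := fun i => f d₁ i with ha_def
  set b : Fin d → ℝ := fun i => f d₂ i with hb_def
  -- density ratio, coordinatewise and global
  set r : Fin d → ℝ → ℝ := fun i y => (a i - b i) * (2 * y - a i - b i) / (2 * v) with hr_def
  set g : Fin d → ℝ → ℝ≥0∞ := fun i y => ENNReal.ofReal (rexp (r i y)) with hg_def
  have hr_meas : ∀ i, Measurable (r i) := by
    intro i
    simp only [hr_def]
    exact ((((measurable_id.const_mul 2).sub_const (a i)).sub_const (b i)).const_mul
      (a i - b i)).div_const (2 * v)
  have hg : ∀ i, Measurable (g i) := by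
    intro i
    simp only [hg_def]
    exact ENNReal.measurable_ofReal.comp (Real.measurable_exp.comp (hr_meas i))
  set G : (Fin d → ℝ) → ℝ≥0∞ := fun x => ∏ i, g i (x i) with hG_def
  have hG : Measurable G := Finset.measurable_prod _ fun i _ => (hg i).comp (measurable_pi_apply i)
  have hpi : (Measure.pi fun i => gaussianReal (a i) v)
      = (Measure.pi fun i => gaussianReal (b i) v).withDensity G :=
    aux_pi_withDensity _ _ g hg (fun i => aux_gauss_ratio hv _ _)
  set ν : Measure (EuclideanSpace ℝ (Fin d)) :=
    (Measure.pi fun i => gaussianReal (b i) v).map e.symm with hν_def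
  have hprob : IsProbabilityMeasure ν := Measure.isProbabilityMeasure_map e.symm.measurable.aemeasurable
  have hμ₂ : (gaussianVec d v).map (fun z => f d₂ + z) = ν := hmech (f d₂)
  have hμ₁ : (gaussianVec d v).map (fun z => f d₁ + z) = ν.withDensity (G ∘ e) := by
    rw [hmech (f d₁)]
    show (Measure.pi fun i => gaussianReal (a i) v).map e.symm = _
    rw [hpi, aux_withDensity_map e.symm _ G hG, MeasurableEquiv.symm_symm]
    rfl
  -- compute the integral
  have hrn := Measure.rnDeriv_withDensity ν (hG.comp e.measurable)
  have hInt : ∫ x, ((((gaussianVec d v).map fun z => f d₁ + z).rnDeriv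
        ((gaussianVec d v).map fun z => f d₂ + z) x).toReal) ^ α
        ∂((gaussianVec d v).map fun z => f d₂ + z)
      = ∫ y, ∏ i, rexp (r i (y i) * α) ∂(Measure.pi fun i => gaussianReal (b i) v) := by
    rw [hμ₁, hμ₂]
    rw [integral_congr_ae (g := fun x => ((G (e x)).toReal) ^ α)
      (by filter_upwards [hrn] with x hx; rw [hx]; rfl)]
    rw [hν_def, integral_map_equiv]
    refine integral_congr_ae (ae_of_all _ fun y => ?_)
    simp only [MeasurableEquiv.apply_symm_apply, hG_def, hg_def]
    rw [ENNReal.toReal_prod]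
    simp_rw [ENNReal.toReal_ofReal (Real.exp_nonneg _)]
    rw [← Real.finset_prod_rpow _ _ (fun i _ => Real.exp_nonneg _)]
    exact Finset.prod_congr rfl fun i _ => (Real.exp_mul _ _).symm
  -- the gaussian integral
  set S : ℝ := ∑ i, (a i - b i) ^ 2 with hS_def
  have hIntVal : ∫ y, ∏ i, rexp (r i (y i) * α) ∂(Measure.pi fun i => gaussianReal (b i) v)
      = rexp (α * (α - 1) * S / (2 * v)) := by
    have hmeas_prod : Measurable fun y : Fin d → ℝ => ∏ i, rexp (r i (y i) * α) :=
      Finset.measurable_prod _ fun i _ =>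
        Real.measurable_exp.comp (((hr_meas i).comp (measurable_pi_apply i)).mul_const α)
    rw [integral_eq_lintegral_of_nonneg_ae
      (ae_of_all _ fun y => Finset.prod_nonneg fun i _ => (Real.exp_nonneg _))
      hmeas_prod.aestronglyMeasurable]
    have : ∀ y : Fin d → ℝ, ENNReal.ofReal (∏ i, rexp (r i (y i) * α))
        = ∏ i, ENNReal.ofReal (rexp (r i (y i) * α)) :=
      fun y => ENNReal.ofReal_prod_of_nonneg fun i _ => Real.exp_nonneg _
    simp_rw [this]
    rw [aux_lintegral_pi d _ (fun i => inferInstance)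
      (fun i y => ENNReal.ofReal (rexp (r i y * α))) (fun i =>
      ENNReal.measurable_ofReal.comp (Real.measurable_exp.comp ((hr_meas i).mul_const α)))]
    have hone : ∀ i : Fin d, ∫⁻ y, ENNReal.ofReal (rexp (r i y * α)) ∂gaussianReal (b i) v
        = ENNReal.ofReal (rexp (α * (α - 1) * (a i - b i) ^ 2 / (2 * v))) := by
      intro i
      have harg : ∀ y : ℝ, r i y * α
          = (α * (a i - b i) / v) * y + (-(α * (a i - b i) * (a i + b i) / (2 * v))) := by
        intro y
        rw [hr_def]
        field_simp
        ring
      simp_rw [harg]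
      rw [aux_gauss_exp_lintegral hv]
      congr 1
      congr 1
      field_simp
      ring
    simp_rw [hone]
    rw [← ENNReal.ofReal_prod_of_nonneg fun i _ => Real.exp_nonneg _, ← Real.exp_sum]
    rw [ENNReal.toReal_ofReal (Real.exp_nonneg _)]
    congr 1
    rw [hS_def, Finset.mul_sum, Finset.sum_div]
  -- wrap up
  have hα1 : α - 1 ≠ 0 := by linarith
  have hrenyi : renyiDiv α ((gaussianVec d v).map fun z => f d₁ + z)
      ((gaussianVec d v).map fun z => f d₂ + z) = α * S / (2 * v) := by
    rw [renyiDiv, hInt, hIntVal, Real.log_exp]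
    field_simp
  rw [hrenyi]
  -- the sensitivity bound
  have hS_le : S ≤ (Δ : ℝ) ^ 2 := by
    have hnorm : ‖f d₁ - f d₂‖ ^ 2 = S := by
      rw [EuclideanSpace.norm_eq, Real.sq_sqrt (by positivity)]
      refine Finset.sum_congr rfl fun i _ => ?_
      rw [Real.norm_eq_abs, sq_abs]
      rfl
    rw [← hnorm]
    have := hsens d₁ d₂ hadj
    nlinarith [norm_nonneg (f d₁ - f d₂)]
  have hvR : (v : ℝ) = (σ : ℝ) ^ 2 * (Δ : ℝ) ^ 2 := by
    rw [hv_def]; push_cast; ring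
  rw [hvR, div_le_div_iff₀ (by positivity) (by positivity)]
  have hσ' : (0:ℝ) < σ := hσ
  have hΔ' : (0:ℝ) < Δ := hΔ
  nlinarith [mul_le_mul_of_nonneg_left hS_le
    (by positivity : (0:ℝ) ≤ α * (2 * (σ:ℝ) ^ 2))]
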